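/- Let V and W be Hilbert spaces, a : V × W → ℝ a continuous bilinear form, and T : V → W a bounded bijective linear operator such that a(u, T u) ≥ ‖u‖_V² for all u ∈ V. Then for every ℓ ∈ W' the problem: find u ∈ V with a(u, v) = ℓ(v) for all v ∈ W, has a unique solution. -/

import Mathlib

open scoped RealInnerProductSpace

/-!
Transporting the test variable by `T` turns `a` into the bilinear form `(u, w) ↦ a u (T w)` on `V`,
which is bounded and, by T-coercivity, coercive. Lax–Milgram together with the Riesz representative
of `ℓ ∘ T` solves the transported problem, and surjectivity of `T` makes it a solution of the original
one. Uniqueness is immediate: if `a u · = 0` then `‖u‖² ≤ a u (T u) = 0`.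
-/

theorem isCoercive_flip_comp_flip {V W : Type*} [NormedAddCommGroup V] [NormedSpace ℝ V]
    [NormedAddCommGroup W] [NormedSpace ℝ W] {A : V →L[ℝ] W →L[ℝ] ℝ} {T : V →L[ℝ] W}
    (hcoer : ∀ u : V, ‖u‖ ^ 2 ≤ A u (T u)) : IsCoercive (A.flip.comp T).flip :=
  ⟨1, one_pos, fun u => by simpa [sq] using hcoer u⟩

section TCoercive

variable {V W : Type*} [NormedAddCommGroup V] [InnerProductSpace ℝ V] [CompleteSpace V]

theorem IsCoercive.exists_forall_apply_eq {B : V →L[ℝ] V →L[ℝ] ℝ} (hB : IsCoercive B)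
    (f : V →L[ℝ] ℝ) : ∃ u : V, ∀ w : V, B u w = f w := by
  refine ⟨hB.continuousLinearEquivOfBilin.symm ((InnerProductSpace.toDual ℝ V).symm f), fun w => ?_⟩
  rw [← hB.continuousLinearEquivOfBilin_apply, ContinuousLinearEquiv.apply_symm_apply,
    InnerProductSpace.toDual_symm_apply]

variable [NormedAddCommGroup W] [NormedSpace ℝ W]

theorem exists_forall_apply_eq_of_tCoercive {A : V →L[ℝ] W →L[ℝ] ℝ} {T : V →L[ℝ] W}
    (hT : Function.Surjective T) (hcoer : ∀ u : V, ‖u‖ ^ 2 ≤ A u (T u)) (ℓ : W →L[ℝ] ℝ) :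
    ∃ u : V, ∀ v : W, A u v = ℓ v := by
  obtain ⟨u, hu⟩ := (isCoercive_flip_comp_flip hcoer).exists_forall_apply_eq (ℓ.comp T)
  refine ⟨u, fun v => ?_⟩
  obtain ⟨w, rfl⟩ := hT v
  exact hu w

end TCoercive

theorem eq_zero_of_tCoercive_of_forall_apply_eq_zero {V W : Type*} [NormedAddCommGroup V]
    [Module ℝ V] [AddCommGroup W] [Module ℝ W] {a : V →ₗ[ℝ] W →ₗ[ℝ] ℝ} {T : V → W}
    (hcoer : ∀ u : V, ‖u‖ ^ 2 ≤ a u (T u)) {u : V} (hu : ∀ v : W, a u v = 0) : u = 0 := by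
  have hle : ‖u‖ ^ 2 ≤ 0 := hu (T u) ▸ hcoer u
  exact norm_eq_zero.mp (pow_eq_zero_iff two_ne_zero |>.mp (le_antisymm hle (sq_nonneg _)))

theorem stmt0_general
    {V W : Type*} [NormedAddCommGroup V] [InnerProductSpace ℝ V] [CompleteSpace V]
    [NormedAddCommGroup W] [InnerProductSpace ℝ W]
    (a : V →ₗ[ℝ] W →ₗ[ℝ] ℝ) (M : ℝ)
    (ha : ∀ (u : V) (v : W), |a u v| ≤ M * ‖u‖ * ‖v‖)
    (T : V →L[ℝ] W) (hT : Function.Bijective T)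
    (hcoer : ∀ u : V, ‖u‖ ^ 2 ≤ a u (T u))
    (ℓ : W →L[ℝ] ℝ) :
    ∃! u : V, ∀ v : W, a u v = ℓ v := by
  let A : V →L[ℝ] W →L[ℝ] ℝ :=
    a.mkContinuous₂ M fun u v => (Real.norm_eq_abs _).trans_le (ha u v)
  obtain ⟨u, hu⟩ := exists_forall_apply_eq_of_tCoercive (A := A) hT.surjective hcoer ℓ
  refine ⟨u, hu, fun y hy => sub_eq_zero.mp ?_⟩
  exact eq_zero_of_tCoercive_of_forall_apply_eq_zero hcoer fun v => by
    rw [map_sub, LinearMap.sub_apply, sub_eq_zero]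
    exact (hy v).trans (hu v).symm

/-- T-coercivity implies well-posedness: for a continuous bilinear form `a` on Hilbert
spaces `V × W` admitting a bounded bijective `T : V → W` with `a u (T u) ≥ ‖u‖²`,
every continuous functional `ℓ` on `W` yields a unique solution of `a u · = ℓ`. -/
theorem stmt0
    {V W : Type*} [NormedAddCommGroup V] [InnerProductSpace ℝ V] [CompleteSpace V]
    [NormedAddCommGroup W] [InnerProductSpace ℝ W] [CompleteSpace W]
    (a : V →ₗ[ℝ] W →ₗ[ℝ] ℝ) (M : ℝ)
    (ha : ∀ (u : V) (v : W), |a u v| ≤ M * ‖u‖ * ‖v‖)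
    (T : V →L[ℝ] W) (hT : Function.Bijective T)
    (hcoer : ∀ u : V, ‖u‖ ^ 2 ≤ a u (T u))
    (ℓ : W →L[ℝ] ℝ) :
    ∃! u : V, ∀ v : W, a u v = ℓ v :=
  stmt0_general a M ha T hT hcoer ℓ
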